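/- The supremum over all prime numbers p of the p-Pythagoras numbers π_p(ℚ) is infinite; that is, for every n ∈ ℕ there exists a prime p with π_p(ℚ) > n. -/

import Mathlib

/-- `x` is not a pole of the Kochen operator `γ_{p,t}(X) = t⁻¹ (X^p - X)/((X^p - X)² - 1)`. -/
def kochenQDefinedAt (p : ℕ) (x : ℚ) : Prop :=
  (x ^ p - x) ^ 2 - 1 ≠ 0

/-- The Kochen operator `γ_{p,t}(x) = t⁻¹ (x^p - x)/((x^p - x)² - 1)` on `ℚ` (for `t = p`
this is `γ_p`, and `γ_{p,-p} = -γ_p`). -/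
def kochenQ (p : ℕ) (t x : ℚ) : ℚ :=
  t⁻¹ * ((x ^ p - x) / ((x ^ p - x) ^ 2 - 1))

/-- The image `γ_{p,t}(ℚ)` of `ℚ` minus the poles under the Kochen operator. -/
def kochenQImage (p : ℕ) (t : ℚ) : Set ℚ :=
  {y | ∃ x : ℚ, kochenQDefinedAt p x ∧ kochenQ p t x = y}

/-- The localization `ℤ_(p)` of `ℤ` at the prime `p`: the rational numbers of nonnegative
`p`-adic valuation.  This is the ring `R_p(ℚ)` of totally `p`-integral elements of `ℚ`. -/
def Zloc (p : ℕ) : Set ℚ := {x | ¬ p ∣ x.den}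

/-- The finite set `P_{p,n}` of polynomials `g ∈ ℤ_(p)[X_1,…,X_n]` of (total) degree at most
`n` and height at most `n` (the height of `g` is `max(N, max_m |a_m|)`, where `N` is the least
common denominator of the coefficients of `g` and `a_m = N·c_m ∈ ℤ` are the scaled
coefficients). -/
def PolyPQ (p n : ℕ) : Set (MvPolynomial (Fin n) ℚ) :=
  {g | (∀ m, ¬ p ∣ (MvPolynomial.coeff m g).den) ∧ g.totalDegree ≤ n ∧
    (g.support.lcm fun m => (MvPolynomial.coeff m g).den) ≤ n ∧
    ∀ m ∈ g.support,
      ((MvPolynomial.coeff m g) *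
        ((g.support.lcm fun m => (MvPolynomial.coeff m g).den) : ℚ)).num.natAbs ≤ n}

/-- The set `R_{p,g,t}(ℚ) = { a/(1 + t b) | a, b ∈ g(γ_{p,t}(ℚ),…,γ_{p,t}(ℚ)), 1 + t b ≠ 0}`. -/
def RgSetQ (p : ℕ) (t : ℚ) {n : ℕ} (g : MvPolynomial (Fin n) ℚ) : Set ℚ :=
  {y | ∃ a b : ℚ,
    (∃ c : Fin n → ℚ, (∀ i, c i ∈ kochenQImage p t) ∧ MvPolynomial.eval c g = a) ∧
    (∃ c : Fin n → ℚ, (∀ i, c i ∈ kochenQImage p t) ∧ MvPolynomial.eval c g = b) ∧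
    1 + t * b ≠ 0 ∧ y = a / (1 + t * b)}

/-- The set `R_{p,g,t,n}(ℚ)` of rationals satisfying a monic polynomial equation of degree at
most `n` with coefficients in `R_{p,g,t}(ℚ)`. -/
def RgnSetQ (p : ℕ) (t : ℚ) {n' : ℕ} (g : MvPolynomial (Fin n') ℚ) (n : ℕ) : Set ℚ :=
  {x | ∃ m : ℕ, 1 ≤ m ∧ m ≤ n ∧ ∃ c : ℕ → ℚ,
    (∀ i < m, c i ∈ RgSetQ p t g) ∧
    x ^ m + ∑ i ∈ Finset.range m, c i * x ^ i = 0}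

/-- The set `R_{p,n}(ℚ) = ⋃_{t ∈ {p,-p}} ⋃_{g ∈ P_{p,n}} R_{p,g,t,n}(ℚ)`. -/
def RnSetQ (p n : ℕ) : Set ℚ :=
  {x | ∃ t : ℚ, (t = (p : ℚ) ∨ t = -(p : ℚ)) ∧ ∃ g ∈ PolyPQ p n, x ∈ RgnSetQ p t g n}

/-- The `p`-Pythagoras number `π_p(ℚ) ∈ ℕ ∪ {∞}`: the least `n` with
`R_p(ℚ) = ℤ_(p) = R_{p,n}(ℚ)`, and `∞` if there is no such `n`. -/
noncomputable def piPythQ (p : ℕ) : ℕ∞ :=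
  sInf ((fun n : ℕ => (n : ℕ∞)) '' {n | RnSetQ p n = Zloc p})


set_option linter.unusedSectionVars false

namespace KochenAux

variable {q : ℕ} [hq : Fact q.Prime]

/-- `x` is zero or has nonnegative `q`-adic valuation. -/
def P0 (q : ℕ) (x : ℚ) : Prop := x = 0 ∨ 0 ≤ padicValRat q x

/-- `x` is zero or has `q`-adic valuation at least 1. -/
def P1 (q : ℕ) (x : ℚ) : Prop := x = 0 ∨ 1 ≤ padicValRat q x

lemma P1.toP0 {x : ℚ} (h : P1 q x) : P0 q x := h.imp id fun h' => le_trans zero_le_one h'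

lemma P0.zero : P0 q 0 := Or.inl rfl
lemma P1.zero : P1 q 0 := Or.inl rfl

lemma P0.mul {x y : ℚ} (hx : P0 q x) (hy : P0 q y) : P0 q (x * y) := by
  rcases hx with rfl | hx
  · exact Or.inl (zero_mul y)
  rcases hy with rfl | hy
  · exact Or.inl (mul_zero x)
  rcases eq_or_ne x 0 with rfl | hx0
  · exact Or.inl (zero_mul y)
  rcases eq_or_ne y 0 with rfl | hy0
  · exact Or.inl (mul_zero x)
  exact Or.inr (by rw [padicValRat.mul hx0 hy0]; positivity)

lemma P1.mulP0 {x y : ℚ} (hx : P1 q x) (hy : P0 q y) : P1 q (x * y) := by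
  rcases hx with rfl | hx
  · exact Or.inl (zero_mul y)
  rcases hy with rfl | hy
  · exact Or.inl (mul_zero x)
  rcases eq_or_ne x 0 with rfl | hx0
  · exact Or.inl (zero_mul y)
  rcases eq_or_ne y 0 with rfl | hy0
  · exact Or.inl (mul_zero x)
  refine Or.inr ?_
  rw [padicValRat.mul hx0 hy0]
  linarith

lemma P0.mulP1 {x y : ℚ} (hx : P0 q x) (hy : P1 q y) : P1 q (x * y) := by
  rw [mul_comm]; exact hy.mulP0 hx

lemma P0.add {x y : ℚ} (hx : P0 q x) (hy : P0 q y) : P0 q (x + y) := by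
  rcases hx with rfl | hx
  · simpa using hy
  rcases hy with rfl | hy
  · rw [add_zero]; exact Or.inr hx
  rcases eq_or_ne (x + y) 0 with h | h
  · exact Or.inl h
  exact Or.inr (le_trans (le_min hx hy) (padicValRat.min_le_padicValRat_add h))

lemma P1.add {x y : ℚ} (hx : P1 q x) (hy : P1 q y) : P1 q (x + y) := by
  rcases hx with rfl | hx
  · simpa using hy
  rcases hy with rfl | hy
  · rw [add_zero]; exact Or.inr hx
  rcases eq_or_ne (x + y) 0 with h | h
  · exact Or.inl h
  exact Or.inr (le_trans (le_min hx hy) (padicValRat.min_le_padicValRat_add h))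

lemma P0.pow {x : ℚ} (hx : P0 q x) (k : ℕ) : P0 q (x ^ k) := by
  induction k with
  | zero => exact Or.inr (by simp)
  | succ k ih => rw [pow_succ]; exact ih.mul hx

lemma P1.pow {x : ℚ} (hx : P1 q x) {k : ℕ} (hk : 1 ≤ k) : P1 q (x ^ k) := by
  obtain ⟨k, rfl⟩ := Nat.exists_eq_add_of_le hk
  rw [add_comm, pow_succ]
  exact (hx.toP0.pow k).mulP1 hx

lemma P0.sum {α : Type*} {s : Finset α} {f : α → ℚ} (h : ∀ i ∈ s, P0 q (f i)) :
    P0 q (∑ i ∈ s, f i) :=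
  Finset.sum_induction f (P0 q) (fun _ _ => P0.add) P0.zero h

lemma P1.sum {α : Type*} {s : Finset α} {f : α → ℚ} (h : ∀ i ∈ s, P1 q (f i)) :
    P1 q (∑ i ∈ s, f i) :=
  Finset.sum_induction f (P1 q) (fun _ _ => P1.add) P1.zero h

lemma P0.prod {α : Type*} {s : Finset α} {f : α → ℚ} (h : ∀ i ∈ s, P0 q (f i)) :
    P0 q (∏ i ∈ s, f i) :=
  Finset.prod_induction f (P0 q) (fun _ _ => P0.mul) (Or.inr (by simp)) h

/-- valuation of a nonzero integer cast is nonnegative -/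
lemma P0.intCast (k : ℤ) : P0 q (k : ℚ) := by
  rcases eq_or_ne k 0 with rfl | hk
  · exact Or.inl (by simp)
  · exact Or.inr (by rw [padicValRat.of_int]; exact_mod_cast Nat.zero_le _)

lemma P0.natCast (k : ℕ) : P0 q (k : ℚ) := by exact_mod_cast P0.intCast (k : ℤ)

lemma val_self : padicValRat q (q : ℚ) = 1 := padicValRat.self hq.out.one_lt

lemma P1.intCast_of_dvd {k : ℤ} (h : (q : ℤ) ∣ k) : P1 q (k : ℚ) := by
  rcases eq_or_ne k 0 with rfl | hk
  · exact Or.inl (by simp)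
  obtain ⟨j, rfl⟩ := h
  have hj : j ≠ 0 := by rintro rfl; simp at hk
  have hq0 : ((q : ℤ) : ℚ) ≠ 0 := by
    exact_mod_cast (Nat.cast_ne_zero (R := ℚ)).mpr hq.out.ne_zero
  have hj0 : ((j : ℤ) : ℚ) ≠ 0 := Int.cast_ne_zero.mpr hj
  refine Or.inr ?_
  push_cast
  rw [padicValRat.mul (by exact_mod_cast hq0) hj0, val_self]
  have := (P0.intCast (q := q) j).resolve_left hj0
  linarith

/-- An integer cast not divisible by `q` has valuation `0`. -/
lemma val_intCast_eq_zero {k : ℤ} (h : ¬ (q : ℤ) ∣ k) : padicValRat q (k : ℚ) = 0 := by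
  rw [padicValRat.of_int]
  have : ¬ q ∣ k.natAbs := by rwa [Int.natCast_dvd] at h
  simp [padicValInt, padicValNat.eq_zero_of_not_dvd this]

lemma val_natCast_eq_zero {k : ℕ} (h : ¬ q ∣ k) : padicValRat q (k : ℚ) = 0 := by
  have h2 := val_intCast_eq_zero (q := q) (k := (k : ℤ)) (by exact_mod_cast h)
  rw [show ((k : ℤ) : ℚ) = (k : ℚ) by push_cast; ring] at h2
  exact h2

/-- nonnegative valuation from denominator not divisible -/
lemma P0.of_den {x : ℚ} (h : ¬ q ∣ x.den) : P0 q x := by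
  refine Or.inr ?_
  unfold padicValRat
  rw [padicValNat.eq_zero_of_not_dvd h]
  simp [padicValInt]

/-- valuation at most `-1` from denominator divisible -/
lemma val_neg_of_den {x : ℚ} (h : q ∣ x.den) : padicValRat q x ≤ -1 := by
  have hd0 : 0 < x.den := x.pos
  have hnum : ¬ q ∣ x.num.natAbs := by
    intro hn
    have := Nat.dvd_gcd hn h
    rw [x.reduced] at this
    exact hq.out.one_lt.ne' (Nat.le_antisymm (Nat.le_of_dvd one_pos this) hq.out.one_le ▸ rfl)
  unfold padicValRat
  have h1 : padicValInt q x.num = 0 := by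
    simp [padicValInt, padicValNat.eq_zero_of_not_dvd hnum]
  have h2 : 1 ≤ padicValNat q x.den := one_le_padicValNat_of_dvd hd0.ne' h
  rw [h1]
  omega

/-- if `v E = 0` and `P1 Δ` then `E + Δ ≠ 0` and `v (E + Δ) = 0`. -/
lemma unit_add {E Δ : ℚ} (hE : E ≠ 0) (hvE : padicValRat q E = 0) (hΔ : P1 q Δ) :
    E + Δ ≠ 0 ∧ padicValRat q (E + Δ) = 0 := by
  rcases hΔ with rfl | hΔ
  · simpa [hE] using hvE
  rcases eq_or_ne Δ 0 with rfl | hΔ0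
  · simpa [hE] using hvE
  have hne : E + Δ ≠ 0 := by
    intro h0
    have : E = -Δ := by linarith [h0]  -- E + Δ = 0
    rw [this, padicValRat.neg] at hvE
    omega
  refine ⟨hne, ?_⟩
  rw [padicValRat.add_eq_of_lt hne hE hΔ0 (by omega)]
  exact hvE

/-- if `v A < v B` (both nonzero) then `A + B ≠ 0` and `v (A+B) = v A`. -/
lemma add_val_eq_left {A B : ℚ} (hA : A ≠ 0) (hB : B ≠ 0)
    (h : padicValRat q A < padicValRat q B) :
    A + B ≠ 0 ∧ padicValRat q (A + B) = padicValRat q A := by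
  have hne : A + B ≠ 0 := by
    intro h0
    have : B = -A := by linarith [h0]
    rw [this, padicValRat.neg] at h
    omega
  exact ⟨hne, padicValRat.add_eq_of_lt hne hA hB h⟩

end KochenAux

namespace KochenAux

variable {q : ℕ} [hq : Fact q.Prime]

lemma val_one : padicValRat q 1 = 0 := by simp [padicValRat]

lemma zmod_pow_eq {p : ℕ} (hd : (q - 1) ∣ (p - 1)) (hp : 1 ≤ p) (c : ZMod q) : c ^ p = c := by
  rcases eq_or_ne c 0 with rfl | hc
  · rw [zero_pow (by omega : p ≠ 0)]
  obtain ⟨d, hdd⟩ := hd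
  have hp1 : p = (q - 1) * d + 1 := by rw [← hdd]; omega
  rw [hp1, pow_succ, pow_mul, ZMod.pow_card_sub_one_eq_one hc, one_pow, one_mul]

lemma int_dvd_frob {p : ℕ} (hd : (q - 1) ∣ (p - 1)) (hp : 1 ≤ p) (a b : ℤ) :
    (q : ℤ) ∣ a ^ p * b - a * b ^ p := by
  have h : ((a ^ p * b - a * b ^ p : ℤ) : ZMod q) = 0 := by
    push_cast
    rw [zmod_pow_eq hd hp, zmod_pow_eq hd hp]
    ring
  exact (ZMod.intCast_zmod_eq_zero_iff_dvd _ _).mp h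

/-- Every element of the Kochen image has `q`-adic valuation at least 1 (or is zero). -/
lemma P1_kochen {p : ℕ} (hp : p.Prime) (hqp : ¬ q ∣ p) (hd : (q - 1) ∣ (p - 1))
    {t : ℚ} (ht : t = (p : ℚ) ∨ t = -(p : ℚ)) {γ : ℚ} (hγ : γ ∈ kochenQImage p t) :
    P1 q γ := by
  obtain ⟨x, hdef, rfl⟩ := hγ
  unfold kochenQ
  set y : ℚ := x ^ p - x with hy_def
  have hy2 : y ^ 2 - 1 ≠ 0 := hdef
  by_cases hy : y = 0
  · left; rw [hy]; simp
  right
  have hp0 : ((p : ℕ) : ℚ) ≠ 0 := Nat.cast_ne_zero.mpr hp.ne_zero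
  have ht0 : t ≠ 0 := by rcases ht with rfl | rfl <;> simpa using hp0
  have hvt : padicValRat q t = 0 := by
    rcases ht with rfl | rfl
    · exact val_natCast_eq_zero hqp
    · rw [padicValRat.neg]; exact val_natCast_eq_zero hqp
  have hx0 : x ≠ 0 := by
    intro h
    apply hy
    rw [hy_def, h, zero_pow hp.ne_zero, sub_zero]
  have hterm : y / (y ^ 2 - 1) ≠ 0 := div_ne_zero hy hy2
  have hvγ : padicValRat q (t⁻¹ * (y / (y ^ 2 - 1)))
      = padicValRat q y - padicValRat q (y ^ 2 - 1) := by
    rw [padicValRat.mul (inv_ne_zero ht0) hterm, padicValRat.inv, hvt,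
        padicValRat.div hy hy2]
    ring
  rw [hvγ]
  by_cases hden : q ∣ x.den
  · -- negative valuation case
    have hvx : padicValRat q x ≤ -1 := val_neg_of_den hden
    have hxp : x ^ p ≠ 0 := pow_ne_zero _ hx0
    have hvxp : padicValRat q (x ^ p) = p * padicValRat q x := padicValRat.pow x
    have hp2 : (2 : ℤ) ≤ (p : ℤ) := by exact_mod_cast hp.two_le
    have hlt : padicValRat q (x ^ p) < padicValRat q (-x) := by
      rw [hvxp, padicValRat.neg]
      nlinarith [hvx]
    have hy_eq : y = x ^ p + (-x) := by rw [hy_def]; ring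
    have h3 := add_val_eq_left hxp (neg_ne_zero.mpr hx0) hlt
    have hvy : padicValRat q y = p * padicValRat q x := by rw [hy_eq, h3.2, hvxp]
    have hy2ne : y ^ 2 ≠ 0 := pow_ne_zero _ hy
    have hv2 : padicValRat q (y ^ 2) = 2 * padicValRat q y := by
      have := padicValRat.pow (p := q) (q := y) (k := 2)
      rw [this]; push_cast; ring
    have hlt2 : padicValRat q (y ^ 2) < padicValRat q (-1 : ℚ) := by
      rw [padicValRat.neg, val_one, hv2, hvy]
      nlinarith [hvx]
    have h4 := add_val_eq_left hy2ne (by norm_num : (-1 : ℚ) ≠ 0) hlt2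
    have hvy2 : padicValRat q (y ^ 2 - 1) = 2 * (p * padicValRat q x) := by
      rw [show y ^ 2 - 1 = y ^ 2 + (-1) by ring, h4.2, hv2, hvy]
    rw [hvy, hvy2]
    nlinarith [hvx]
  · -- nonnegative valuation case
    obtain ⟨p', hp'⟩ : ∃ p', p = p' + 1 := ⟨p - 1, (Nat.succ_pred_eq_of_pos hp.pos).symm⟩
    have hβ : ((x.den : ℚ)) ≠ 0 := Nat.cast_ne_zero.mpr x.den_nz
    have hxd : x * (x.den : ℚ) = (x.num : ℚ) := Rat.mul_den_eq_num x
    set K : ℤ := x.num ^ p - x.num * (x.den : ℤ) ^ p' with hK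
    have hyK : y = (K : ℚ) / ((x.den : ℚ)) ^ p := by
      rw [eq_div_iff (pow_ne_zero _ hβ)]
      calc y * (x.den : ℚ) ^ p
          = (x * (x.den : ℚ)) ^ p - (x * (x.den : ℚ)) * (x.den : ℚ) ^ p' := by
            rw [hy_def, hp']; ring
        _ = (K : ℚ) := by rw [hxd, hK]; push_cast; ring
    have hKne : K ≠ 0 := by
      intro h
      apply hy
      rw [hyK, h]
      simp
    have hKdvd : (q : ℤ) ∣ K := by
      have h1 : (q : ℤ) ∣ x.num ^ p * (x.den : ℤ) - x.num * (x.den : ℤ) ^ p :=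
        int_dvd_frob hd hp.one_lt.le x.num (x.den : ℤ)
      have h2 : x.num ^ p * (x.den : ℤ) - x.num * (x.den : ℤ) ^ p = (x.den : ℤ) * K := by
        rw [hK, hp']; ring
      rw [h2] at h1
      have hqZ : Prime (q : ℤ) := Nat.prime_iff_prime_int.mp hq.out
      rcases hqZ.dvd_mul.mp h1 with h | h
      · exact absurd (by exact_mod_cast h : q ∣ x.den) hden
      · exact h
    have hvy : 1 ≤ padicValRat q y := by
      have hKQ : ((K : ℚ)) ≠ 0 := Int.cast_ne_zero.mpr hKne
      have hdp : ((x.den : ℚ)) ^ p ≠ 0 := pow_ne_zero _ hβ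
      rw [hyK, padicValRat.div hKQ hdp]
      have h1 : 1 ≤ padicValRat q (K : ℚ) := (P1.intCast_of_dvd hKdvd).resolve_left hKQ
      have h2 : padicValRat q ((x.den : ℚ) ^ p) = 0 := by
        rw [padicValRat.pow (x.den : ℚ), val_natCast_eq_zero hden]
        ring
      omega
    have hvy2 : padicValRat q (y ^ 2 - 1) = 0 := by
      have hppow : P1 q (y ^ 2) := P1.pow (q := q) (Or.inr hvy) one_le_two
      have h5 := unit_add (E := (-1 : ℚ)) (Δ := y ^ 2) (by norm_num)
        (by rw [padicValRat.neg, val_one]) hppow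
      rw [show y ^ 2 - 1 = -1 + y ^ 2 by ring]
      exact h5.2
    rw [hvy2]
    omega

end KochenAux


namespace KochenAux

variable {q : ℕ} [hq : Fact q.Prime]

lemma P0_RgSet {p n m : ℕ} (hp : p.Prime) (hqp : ¬ q ∣ p) (hd : (q - 1) ∣ (p - 1))
    (hm : m ≤ n) (hnq : n < q)
    (havoid : ∀ A N' : ℤ, A.natAbs ≤ n → 1 ≤ N' → N' ≤ n → ¬ (q : ℤ) ∣ (N' + p * A))
    {t : ℚ} (ht : t = (p : ℚ) ∨ t = -(p : ℚ))
    {g : MvPolynomial (Fin m) ℚ} (hg : g ∈ PolyPQ p m)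
    {z : ℚ} (hz : z ∈ RgSetQ p t g) : P0 q z := by
  obtain ⟨hgden, hgdeg, hgN, hgheight⟩ := hg
  set N : ℕ := g.support.lcm fun mon => (MvPolynomial.coeff mon g).den with hN_def
  have hN0 : N ≠ 0 := by
    rw [hN_def]
    intro h
    rw [Finset.lcm_eq_zero_iff] at h
    obtain ⟨mon, _, hmon⟩ := h
    have h2 : (MvPolynomial.coeff mon g).den = 0 := by simpa using hmon
    exact Rat.den_nz _ h2
  have hN1 : 1 ≤ N := Nat.one_le_iff_ne_zero.mpr hN0
  have hNn : N ≤ n := le_trans hgN hm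
  -- the rational lcm appearing in the height condition is 1
  have hL : (g.support.lcm fun mon => ((MvPolynomial.coeff mon g).den : ℚ)) = 1 := by
    have h0 : (g.support.lcm fun mon => ((MvPolynomial.coeff mon g).den : ℚ)) ≠ 0 := by
      intro h
      rw [Finset.lcm_eq_zero_iff] at h
      obtain ⟨mon, _, hmon⟩ := h
      have h2 : ((MvPolynomial.coeff mon g).den : ℚ) = 0 := by simpa using hmon
      exact Rat.den_nz _ (by exact_mod_cast h2)
    calc (g.support.lcm fun mon => ((MvPolynomial.coeff mon g).den : ℚ))
        = normalize (g.support.lcm fun mon => ((MvPolynomial.coeff mon g).den : ℚ)) :=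
          (Finset.normalize_lcm).symm
      _ = 1 := normalize_eq_one.mpr (isUnit_iff_ne_zero.mpr h0)
  -- every coefficient of g is q-integral
  have hP0coeff : ∀ mon, P0 q (MvPolynomial.coeff mon g) := by
    intro mon
    by_cases hmon : mon ∈ g.support
    · have hdvd : (MvPolynomial.coeff mon g).den ∣ N := Finset.dvd_lcm hmon
      have hcden : ¬ q ∣ (MvPolynomial.coeff mon g).den := by
        intro hdq
        have := Nat.le_of_dvd (Nat.pos_of_ne_zero hN0) (dvd_trans hdq hdvd)
        omega
      exact P0.of_den hcden
    · rw [MvPolynomial.notMem_support_iff.mp hmon]; exact P0.zero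
  -- evaluation lemmas
  have heval : ∀ c : Fin m → ℚ, (∀ i, P1 q (c i)) →
      P0 q (MvPolynomial.eval c g) ∧ P1 q (MvPolynomial.eval c g - MvPolynomial.coeff 0 g) := by
    intro c hc
    have hprodP0 : ∀ mon : Fin m →₀ ℕ, P0 q (∏ i, c i ^ mon i) :=
      fun mon => P0.prod fun i _ => P0.pow (P1.toP0 (hc i)) _
    have htermP1 : ∀ mon : Fin m →₀ ℕ, mon ≠ 0 →
        P1 q (MvPolynomial.coeff mon g * ∏ i, c i ^ mon i) := by
      intro mon hmon
      obtain ⟨j, hj⟩ : ∃ j, mon j ≠ 0 := by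
        by_contra hcon
        push_neg at hcon
        exact hmon (Finsupp.ext fun j => hcon j)
      have hsplit : (∏ i, c i ^ mon i) = c j ^ mon j * ∏ i ∈ Finset.univ.erase j, c i ^ mon i :=
        (Finset.mul_prod_erase _ _ (Finset.mem_univ j)).symm
      have h1 : P1 q (c j ^ mon j) := P1.pow (hc j) (Nat.one_le_iff_ne_zero.mpr hj)
      have h2 : P0 q (∏ i ∈ Finset.univ.erase j, c i ^ mon i) :=
        P0.prod fun i _ => P0.pow (P1.toP0 (hc i)) _
      rw [hsplit]
      exact P0.mulP1 (hP0coeff mon) (P1.mulP0 h1 h2)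
    constructor
    · rw [MvPolynomial.eval_eq']
      exact P0.sum fun mon _ => P0.mul (hP0coeff mon) (hprodP0 mon)
    · rw [MvPolynomial.eval_eq']
      by_cases h0 : (0 : Fin m →₀ ℕ) ∈ g.support
      · rw [← Finset.add_sum_erase _ _ h0,
          show (MvPolynomial.coeff 0 g * ∏ i, c i ^ (0 : Fin m →₀ ℕ) i)
            = MvPolynomial.coeff 0 g by simp, add_sub_cancel_left]
        exact P1.sum fun mon hmon => htermP1 mon (Finset.ne_of_mem_erase hmon)
      · rw [MvPolynomial.notMem_support_iff.mp h0, sub_zero]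
        exact P1.sum fun mon hmon => htermP1 mon (fun h => h0 (h ▸ hmon))
  -- the constant coefficient as a fraction A0 / D
  set g0 : ℚ := MvPolynomial.coeff 0 g with hg0_def
  set A0 : ℤ := g0.num with hA0_def
  set D : ℕ := g0.den with hD_def
  have hdeng0 : D ∣ N := by
    by_cases h0 : (0 : Fin m →₀ ℕ) ∈ g.support
    · exact Finset.dvd_lcm h0
    · rw [hD_def, hg0_def, MvPolynomial.notMem_support_iff.mp h0]; simp
  have hD1 : 1 ≤ D := g0.pos
  have hDn : D ≤ n := le_trans (Nat.le_of_dvd (Nat.pos_of_ne_zero hN0) hdeng0) hNn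
  have habs : A0.natAbs ≤ m := by
    by_cases h0 : (0 : Fin m →₀ ℕ) ∈ g.support
    · have := hgheight 0 h0
      rw [hL, mul_one] at this
      exact this
    · rw [hA0_def, hg0_def, MvPolynomial.notMem_support_iff.mp h0]; simp
  have hDQ : ((D : ℕ) : ℚ) ≠ 0 := Nat.cast_ne_zero.mpr (by omega)
  have hg0D : g0 * (D : ℚ) = (A0 : ℚ) := Rat.mul_den_eq_num g0
  -- valuation of 1 + ε p g0
  have hvE : ∀ (ε : ℤ), ε = 1 ∨ ε = -1 →
      ((1 : ℚ) + (ε : ℚ) * (p : ℚ) * g0 ≠ 0 ∧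
        padicValRat q (1 + (ε : ℚ) * (p : ℚ) * g0) = 0) := by
    intro ε hε
    set M : ℤ := (D : ℤ) + (p : ℤ) * (ε * A0) with hM_def
    have hMdvd : ¬ (q : ℤ) ∣ M := by
      apply havoid (ε * A0) ((D : ℤ))
        (by
          calc (ε * A0).natAbs = ε.natAbs * A0.natAbs := Int.natAbs_mul ε A0
            _ ≤ n := by rcases hε with rfl | rfl <;> simpa using le_trans habs hm)
        (by exact_mod_cast hD1) (by exact_mod_cast hDn)
    have hM0 : M ≠ 0 := fun h => hMdvd (h ▸ dvd_zero _)
    have hEeq : (1 : ℚ) + (ε : ℚ) * (p : ℚ) * g0 = (M : ℚ) / (D : ℚ) := by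
      rw [eq_div_iff hDQ, hM_def]
      push_cast
      calc ((1 : ℚ) + (ε : ℚ) * (p : ℚ) * g0) * (D : ℚ)
          = (D : ℚ) + (ε : ℚ) * (p : ℚ) * (g0 * (D : ℚ)) := by ring
        _ = (D : ℚ) + (p : ℚ) * ((ε : ℚ) * (A0 : ℚ)) := by rw [hg0D]; ring
    have hvM : padicValRat q ((M : ℚ)) = 0 := val_intCast_eq_zero hMdvd
    have hqN : ¬ q ∣ D := fun h => absurd (Nat.le_of_dvd (by omega) h) (by omega)
    have hvN : padicValRat q ((D : ℚ)) = 0 := val_natCast_eq_zero hqN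
    have hMQ : ((M : ℤ) : ℚ) ≠ 0 := Int.cast_ne_zero.mpr hM0
    constructor
    · rw [hEeq]; exact div_ne_zero hMQ hDQ
    · rw [hEeq, padicValRat.div hMQ hDQ, hvM, hvN]; ring
  -- unfold membership
  obtain ⟨a, b, ⟨ca, hca, haeq⟩, ⟨cb, hcb, hbeq⟩, hne, rfl⟩ := hz
  have hkca : ∀ i, P1 q (ca i) := fun i => P1_kochen hp hqp hd ht (hca i)
  have hkcb : ∀ i, P1 q (cb i) := fun i => P1_kochen hp hqp hd ht (hcb i)
  have haP0 : P0 q a := haeq ▸ (heval ca hkca).1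
  have hbP1 : P1 q (b - g0) := hbeq ▸ (heval cb hkcb).2
  -- valuation of 1 + t * b
  have hvden : padicValRat q (1 + t * b) = 0 := by
    have hsplit : 1 + t * b = (1 + t * g0) + t * (b - g0) := by ring
    have hvt0 : P0 q t := by
      rcases ht with rfl | rfl
      · exact P0.natCast p
      · rw [show -((p : ℕ) : ℚ) = (((-(p : ℤ)) : ℤ) : ℚ) by push_cast; ring]
        exact P0.intCast _
    have hΔ : P1 q (t * (b - g0)) := P0.mulP1 hvt0 hbP1
    rcases ht with rfl | rfl
    · have hE := hvE 1 (Or.inl rfl)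
      rw [show (1 : ℚ) + ((1 : ℤ) : ℚ) * ((p : ℕ) : ℚ) * g0
          = 1 + ((p : ℕ) : ℚ) * g0 by push_cast; ring] at hE
      have h6 := unit_add hE.1 hE.2 hΔ
      rw [hsplit]
      exact h6.2
    · have hE := hvE (-1) (Or.inr rfl)
      rw [show (1 : ℚ) + ((-1 : ℤ) : ℚ) * ((p : ℕ) : ℚ) * g0
          = 1 + (-((p : ℕ) : ℚ)) * g0 by push_cast; ring] at hE
      have h6 := unit_add hE.1 hE.2 hΔ
      rw [hsplit]
      exact h6.2
  -- conclude
  rcases eq_or_ne a 0 with rfl | ha0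
  · rw [zero_div]; exact P0.zero
  refine Or.inr ?_
  rw [padicValRat.div ha0 hne, hvden]
  have := haP0.resolve_left ha0
  omega

end KochenAux
namespace KochenAux

variable {q : ℕ} [hq : Fact q.Prime]

/-- The witness `1/q` does not belong to `RnSetQ p m`. -/
lemma witness_not_mem {p n m : ℕ} (hp : p.Prime) (hqp : ¬ q ∣ p) (hd : (q - 1) ∣ (p - 1))
    (hm : m ≤ n) (hnq : n < q)
    (havoid : ∀ A N' : ℤ, A.natAbs ≤ n → 1 ≤ N' → N' ≤ n → ¬ (q : ℤ) ∣ (N' + p * A)) :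
    ((q : ℚ))⁻¹ ∉ RnSetQ p m := by
  rintro ⟨t, ht, g, hg, k, hk1, hkk, c, hc, heq⟩
  have hcP0 : ∀ i < k, P0 q (c i) := fun i hi =>
    P0_RgSet hp hqp hd hm hnq havoid ht hg (hc i hi)
  have hq0 : ((q : ℕ) : ℚ) ≠ 0 := Nat.cast_ne_zero.mpr hq.out.ne_zero
  have hmain : (1 : ℚ) + ∑ i ∈ Finset.range k, c i * (q : ℚ) ^ (k - i) = 0 := by
    have h1 : ((q : ℚ)) ^ k *
        (((q : ℚ))⁻¹ ^ k + ∑ i ∈ Finset.range k, c i * ((q : ℚ))⁻¹ ^ i) = 0 := by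
      rw [heq, mul_zero]
    rw [mul_add, Finset.mul_sum] at h1
    have h2 : ((q : ℚ)) ^ k * ((q : ℚ))⁻¹ ^ k = 1 := by
      rw [← mul_pow, mul_inv_cancel₀ hq0, one_pow]
    have h3 : ∀ i ∈ Finset.range k,
        (q : ℚ) ^ k * (c i * ((q : ℚ))⁻¹ ^ i) = c i * (q : ℚ) ^ (k - i) := by
      intro i hi
      have hik : i ≤ k := le_of_lt (Finset.mem_range.mp hi)
      have hsplit : (q : ℚ) ^ k = (q : ℚ) ^ (k - i) * (q : ℚ) ^ i := by
        rw [← pow_add]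
        congr 1
        omega
      rw [hsplit]
      have hinv : (q : ℚ) ^ i * ((q : ℚ))⁻¹ ^ i = 1 := by
        rw [← mul_pow, mul_inv_cancel₀ hq0, one_pow]
      calc (q : ℚ) ^ (k - i) * (q : ℚ) ^ i * (c i * ((q : ℚ))⁻¹ ^ i)
          = c i * (q : ℚ) ^ (k - i) * ((q : ℚ) ^ i * ((q : ℚ))⁻¹ ^ i) := by ring
        _ = c i * (q : ℚ) ^ (k - i) := by rw [hinv, mul_one]
    rw [Finset.sum_congr rfl h3, h2] at h1
    exact h1
  have hsum : P1 q (∑ i ∈ Finset.range k, c i * (q : ℚ) ^ (k - i)) := by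
    refine P1.sum fun i hi => ?_
    have hik : i < k := Finset.mem_range.mp hi
    have hq1 : P1 q ((q : ℚ)) := Or.inr (le_of_eq val_self.symm)
    exact P0.mulP1 (hcP0 i hik) (P1.pow hq1 (by omega))
  have hsumeq : ∑ i ∈ Finset.range k, c i * (q : ℚ) ^ (k - i) = -1 := by linarith
  rcases hsum with h | h
  · rw [hsumeq] at h; norm_num at h
  · rw [hsumeq] at h
    have hneg : padicValRat q (-1 : ℚ) = 0 := by
      rw [show (-1 : ℚ) = -(1 : ℚ) by norm_num, padicValRat.neg, val_one]
    omega

end KochenAux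

open KochenAux in
theorem sup_piPythQ_eq_top' (n : ℕ) : ∃ p : ℕ, p.Prime ∧ (n : ℕ∞) < piPythQ p := by
  classical
  -- choose a large auxiliary prime q
  obtain ⟨q, hqge, hqprime⟩ := Nat.exists_infinite_primes (4 * n * n + 2 * n + 2)
  haveI : Fact q.Prime := ⟨hqprime⟩
  have hq2 : 2 ≤ q := hqprime.two_le
  have hnq : n < q := by
    have h1 : n < 2 * n + 2 := by omega
    have h2 : 2 * n + 2 ≤ 4 * n * n + 2 * n + 2 := by linarith [Nat.zero_le (4 * n * n)]
    omega
  -- the bad set of residues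
  set f : ℤ × ℤ → ZMod q := fun NA => (NA.1 : ZMod q) * (NA.2 : ZMod q)⁻¹ with hf_def
  set S : Finset (ℤ × ℤ) := Finset.Icc (1 : ℤ) (n : ℤ) ×ˢ Finset.Icc (-(n : ℤ)) (n : ℤ)
    with hS_def
  set B : Finset (ZMod q) := (S.image f ∪ S.image (fun NA => - f NA)) ∪ {0} with hB_def
  have hScard : S.card = n * (2 * n + 1) := by
    rw [hS_def, Finset.card_product, Int.card_Icc, Int.card_Icc]
    congr 1 <;> omega
  have hBcard : B.card < q := by
    have h1 : B.card ≤ (S.image f ∪ S.image (fun NA => - f NA)).card + 1 := by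
      refine le_trans (Finset.card_union_le _ _) ?_
      simp
    have h2 : (S.image f ∪ S.image (fun NA => - f NA)).card ≤ S.card + S.card :=
      le_trans (Finset.card_union_le _ _)
        (Nat.add_le_add (Finset.card_image_le) (Finset.card_image_le))
    have h3 : 2 * (n * (2 * n + 1)) + 1 = 4 * n * n + 2 * n + 1 := by ring
    have := hScard
    omega
  -- choose a good residue r
  have hrex : ∃ r : ZMod q, r ∉ B := by
    by_contra hcon
    push_neg at hcon
    have hsub : (Finset.univ : Finset (ZMod q)) ⊆ B := fun r _ => hcon r
    have := Finset.card_le_card hsub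
    rw [Finset.card_univ, ZMod.card q] at this
    omega
  obtain ⟨r, hrB⟩ := hrex
  have hr0 : r ≠ 0 := fun h => hrB (by
    rw [h, hB_def]
    exact Finset.mem_union_right _ (Finset.mem_singleton_self 0))
  have hrkey : ∀ N' A : ℤ, 1 ≤ N' → N' ≤ (n : ℤ) → A.natAbs ≤ n →
      ((N' : ZMod q) + r * (A : ZMod q)) ≠ 0 := by
    intro N' A h1 h2 h3 heq0
    by_cases hA : (A : ZMod q) = 0
    · rw [hA, mul_zero, add_zero] at heq0
      have hdvd := (ZMod.intCast_zmod_eq_zero_iff_dvd N' q).mp heq0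
      have := Int.le_of_dvd (by omega) hdvd
      omega
    · apply hrB
      have h4 : r * (A : ZMod q) = -(N' : ZMod q) := by
        have := heq0
        linear_combination heq0
      have hrval : r = -((N' : ZMod q) * (A : ZMod q)⁻¹) := by
        calc r = r * (A : ZMod q) * (A : ZMod q)⁻¹ := (mul_inv_cancel_right₀ hA r).symm
          _ = -((N' : ZMod q) * (A : ZMod q)⁻¹) := by rw [h4]; ring
      rw [hB_def]
      refine Finset.mem_union_left _ (Finset.mem_union_right _ ?_)
      rw [Finset.mem_image]
      refine ⟨(N', A), ?_, ?_⟩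
      · rw [hS_def, Finset.mem_product, Finset.mem_Icc, Finset.mem_Icc]
        constructor
        · exact ⟨h1, h2⟩
        · constructor <;> omega
      · rw [hf_def, hrval]
  -- Dirichlet: a prime p with p ≡ r (mod q) and p ≡ 1 (mod q-1)
  have hcop : Nat.Coprime q (q - 1) := by
    have hd1 : Nat.gcd q (q - 1) ∣ q := Nat.gcd_dvd_left _ _
    have hd2 : Nat.gcd q (q - 1) ∣ q - 1 := Nat.gcd_dvd_right _ _
    have h1 := Nat.dvd_sub hd1 hd2
    rw [show q - (q - 1) = 1 by omega] at h1
    exact Nat.dvd_one.mp h1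
  haveI : NeZero (q * (q - 1)) := ⟨Nat.mul_ne_zero (by omega) (by omega)⟩
  set e := ZMod.chineseRemainder hcop with he_def
  set a : ZMod (q * (q - 1)) := e.symm (r, 1) with ha_def
  have haunit : IsUnit a := by
    have h1 : IsUnit ((r, (1 : ZMod (q - 1))) : ZMod q × ZMod (q - 1)) :=
      isUnit_iff_exists_inv.mpr ⟨(r⁻¹, 1), by
        rw [Prod.mk_mul_mk, mul_inv_cancel₀ hr0, mul_one]; rfl⟩
    exact h1.map e.symm.toRingHom
  obtain ⟨p, hpgt, hpprime, hpmod⟩ := Nat.forall_exists_prime_gt_and_eq_mod haunit 0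
  -- project the congruence
  have h5 : e ((p : ℕ) : ZMod (q * (q - 1))) = ((p : ZMod q), (p : ZMod (q - 1))) := by
    rw [map_natCast]
    constructor
  have h6 : ((p : ZMod q), (p : ZMod (q - 1))) = (r, (1 : ZMod (q - 1))) := by
    rw [← h5, hpmod, ha_def]
    exact e.apply_symm_apply _
  have hpr : (p : ZMod q) = r := congrArg Prod.fst h6
  have hp1 : (p : ZMod (q - 1)) = 1 := congrArg Prod.snd h6
  have hqp : ¬ q ∣ p := by
    intro h
    have : (p : ZMod q) = 0 := (ZMod.natCast_eq_zero_iff p q).mpr h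
    rw [hpr] at this
    exact hr0 this
  have hdvd : (q - 1) ∣ (p - 1) := by
    have h7 : p ≡ 1 [MOD q - 1] := by
      have : ((p : ℕ) : ZMod (q - 1)) = ((1 : ℕ) : ZMod (q - 1)) := by
        rw [hp1]; norm_num
      exact (ZMod.natCast_eq_natCast_iff _ _ _).mp this
    exact (Nat.modEq_iff_dvd' hpprime.one_lt.le).mp h7.symm
  have havoid : ∀ A N' : ℤ, A.natAbs ≤ n → 1 ≤ N' → N' ≤ n → ¬ (q : ℤ) ∣ (N' + p * A) := by
    intro A N' hA h1 h2 hdvd'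
    have h8 : ((N' + p * A : ℤ) : ZMod q) = 0 := (ZMod.intCast_zmod_eq_zero_iff_dvd _ q).mpr hdvd'
    push_cast at h8
    rw [hpr] at h8
    exact hrkey N' A h1 h2 hA h8
  refine ⟨p, hpprime, ?_⟩
  -- the witness 1/q
  have hwitZloc : ((q : ℚ))⁻¹ ∈ Zloc p := by
    simp only [Zloc, Set.mem_setOf_eq]
    rw [Rat.inv_natCast_den_of_pos (by omega : 0 < q)]
    intro hpq
    rcases hqprime.eq_one_or_self_of_dvd p hpq with h | h
    · exact hpprime.one_lt.ne' h
    · exact hqp (h ▸ dvd_refl p)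
  have hwitness : ∀ m ≤ n, RnSetQ p m ≠ Zloc p := by
    intro m hm heqset
    have hmem : ((q : ℚ))⁻¹ ∈ RnSetQ p m := heqset ▸ hwitZloc
    exact witness_not_mem hpprime hqp hdvd hm hnq havoid hmem
  have hfinal : ∀ b ∈ ((fun k : ℕ => (k : ℕ∞)) '' {k | RnSetQ p k = Zloc p}),
      (((n + 1 : ℕ)) : ℕ∞) ≤ b := by
    rintro b ⟨k, hk, rfl⟩
    have hkn : n + 1 ≤ k := by
      by_contra h
      exact hwitness k (by omega) hk
    show ((n + 1 : ℕ) : ℕ∞) ≤ (k : ℕ∞)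
    exact_mod_cast hkn
  calc (n : ℕ∞) < (((n + 1 : ℕ)) : ℕ∞) := by exact_mod_cast Nat.lt_succ_self n
    _ ≤ piPythQ p := le_sInf hfinal
/-- **Proposition.**  `sup_p π_p(ℚ) = ∞`: for every `n ∈ ℕ` there is a prime `p` with
`π_p(ℚ) > n`. -/
theorem sup_piPythQ_eq_top (n : ℕ) : ∃ p : ℕ, p.Prime ∧ (n : ℕ∞) < piPythQ p := by
  exact sup_piPythQ_eq_top' n
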